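/- Let K be a convex body with the origin in its interior, positive continuous curvature function f_K, and p > 0. Then as_p(K) := ∫_{S^{n-1}} f_p(K,u)^{n/(n+p)} dσ(u) equals the infimum over all star bodies L about the origin of n V_p(K, L°)^{n/(n+p)} |L|^{p/(n+p)}, where V_p(K,L°) = (1/n) ∫_{S^{n-1}} ρ_L(u)^{-p} f_p(K,u) dσ(u) and |L| = (1/n) ∫_{S^{n-1}} ρ_L(u)^n dσ(u). -/

import Mathlib

open MeasureTheory Metric
open scoped RealInnerProductSpace ENNReal NNReal

noncomputable section

/-- A convex body: a convex compact subset of `ℝⁿ` with nonempty interior. -/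
def IsConvexBody (n : ℕ) (K : Set (EuclideanSpace ℝ (Fin n))) : Prop :=
  Convex ℝ K ∧ IsCompact K ∧ (interior K).Nonempty

/-- The support function of `K`. -/
def suppFn (n : ℕ) (K : Set (EuclideanSpace ℝ (Fin n)))
    (u : EuclideanSpace ℝ (Fin n)) : ℝ :=
  sSup ((fun x => ⟪x, u⟫) '' K)

/-- The polar body `K° = {y : ⟨x,y⟩ ≤ 1 for all x ∈ K}`. -/
def polarBody (n : ℕ) (K : Set (EuclideanSpace ℝ (Fin n))) :
    Set (EuclideanSpace ℝ (Fin n)) :=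
  {y | ∀ x ∈ K, ⟪x, y⟫ ≤ 1}

/-- The volume of a set, as a real number. -/
def vol (n : ℕ) (A : Set (EuclideanSpace ℝ (Fin n))) : ℝ := (volume A).toReal

/-- Spherical Lebesgue measure `σ` on the unit sphere `S^{n-1}`, normalized so that
`σ(S^{n-1}) = n ω_n`. -/
def sphMeasure (n : ℕ) : Measure (sphere (0 : EuclideanSpace ℝ (Fin n)) 1) :=
  (volume : Measure (EuclideanSpace ℝ (Fin n))).toSphere

/-- `S` is the surface area measure `S(K,·)` of `K`, characterized by the geometric
description: for any Borel set `A ⊆ S^{n-1}`, `S(K,A)` is the `(n-1)`-Hausdorff measure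
of the set of boundary points of `K` having a supporting hyperplane with outer normal
in `A`. -/
def IsSurfaceMeasure (n : ℕ) (K : Set (EuclideanSpace ℝ (Fin n)))
    (S : Measure (sphere (0 : EuclideanSpace ℝ (Fin n)) 1)) : Prop :=
  ∀ A : Set (sphere (0 : EuclideanSpace ℝ (Fin n)) 1), MeasurableSet A →
    S A = μH[(n : ℝ) - 1] {x | x ∈ frontier K ∧ ∃ u ∈ A, ∀ y ∈ K,
      ⟪y, (u : EuclideanSpace ℝ (Fin n))⟫ ≤ ⟪x, (u : EuclideanSpace ℝ (Fin n))⟫}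

/-- The `p`-mixed volume `V_p(K,Q) = (1/n) ∫_{S^{n-1}} h_Q^p h_K^{1-p} dS(K,·)`,
expressed with respect to a surface area measure `S` of `K`. -/
def mixedVol (n : ℕ) (p : ℝ) (K Q : Set (EuclideanSpace ℝ (Fin n)))
    (S : Measure (sphere (0 : EuclideanSpace ℝ (Fin n)) 1)) : ℝ :=
  (1 / (n : ℝ)) * ∫ u, (suppFn n Q ↑u) ^ p * (suppFn n K ↑u) ^ (1 - p) ∂S

/-- The set of competitors `n V_p(K,Q)^{n/(n+p)} |Q°|^{p/(n+p)}`, `Q` ranging over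
convex bodies with the origin in their interior. -/
def geomSet (n : ℕ) (p : ℝ) (K : Set (EuclideanSpace ℝ (Fin n)))
    (S : Measure (sphere (0 : EuclideanSpace ℝ (Fin n)) 1)) : Set ℝ :=
  {x | ∃ Q, IsConvexBody n Q ∧ (0 : EuclideanSpace ℝ (Fin n)) ∈ interior Q ∧
    x = (n : ℝ) * (mixedVol n p K Q S) ^ ((n : ℝ) / ((n : ℝ) + p)) *
      (vol n (polarBody n Q)) ^ (p / ((n : ℝ) + p))}

/-- The `L_p` geominimal surface area `G̃_p(K)`: an infimum for `p ≥ 0` and a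
supremum for `p < 0`. -/
def geomin (n : ℕ) (p : ℝ) (K : Set (EuclideanSpace ℝ (Fin n)))
    (S : Measure (sphere (0 : EuclideanSpace ℝ (Fin n)) 1)) : ℝ :=
  if 0 ≤ p then sInf (geomSet n p K S) else sSup (geomSet n p K S)

/-- The radial function of `L`. -/
def radFn (n : ℕ) (L : Set (EuclideanSpace ℝ (Fin n)))
    (u : sphere (0 : EuclideanSpace ℝ (Fin n)) 1) : ℝ :=
  sSup {t : ℝ | t • (u : EuclideanSpace ℝ (Fin n)) ∈ L}

/-- `K` is an origin-symmetric ellipsoid. -/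
def IsOriginSymmEllipsoid (n : ℕ) (K : Set (EuclideanSpace ℝ (Fin n))) : Prop :=
  ∃ T : EuclideanSpace ℝ (Fin n) ≃ₗ[ℝ] EuclideanSpace ℝ (Fin n),
    K = T '' closedBall (0 : EuclideanSpace ℝ (Fin n)) 1

/-- `K` has centroid at the origin. -/
def IsCentered (n : ℕ) (K : Set (EuclideanSpace ℝ (Fin n))) : Prop :=
  ∫ x in K, x = (0 : EuclideanSpace ℝ (Fin n))


section AuxLemmas

open Bornology

variable {n : ℕ}

lemma suppFn_pos (K : Set (EuclideanSpace ℝ (Fin n))) (hK : IsConvexBody n K)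
    (h0 : (0 : EuclideanSpace ℝ (Fin n)) ∈ interior K)
    (u : sphere (0 : EuclideanSpace ℝ (Fin n)) 1) : 0 < suppFn n K ↑u := by
  obtain ⟨ε, hε, hball⟩ := Metric.mem_nhds_iff.mp (mem_interior_iff_mem_nhds.mp h0)
  have hnorm : ‖(u : EuclideanSpace ℝ (Fin n))‖ = 1 := by
    have := u.2
    simp only [mem_sphere_iff_norm, sub_zero] at this
    exact this
  have hmem : (ε/2) • (u : EuclideanSpace ℝ (Fin n)) ∈ K := by
    apply hball
    simp only [mem_ball, dist_zero_right, norm_smul, hnorm, mul_one, Real.norm_eq_abs]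
    rw [abs_of_pos (by linarith)]
    linarith
  have hbdd : BddAbove ((fun x => ⟪x, (u : EuclideanSpace ℝ (Fin n))⟫) '' K) :=
    (hK.2.1.image (continuous_id.inner continuous_const)).bddAbove
  have hle : (ε/2) * 1 ^ 2 ≤ suppFn n K ↑u := by
    have h1 := le_csSup hbdd ⟨_, hmem, rfl⟩
    simp only [real_inner_smul_left, real_inner_self_eq_norm_sq, hnorm] at h1
    rw [suppFn]
    exact h1
  rw [one_pow, mul_one] at hle
  linarith

lemma suppFn_continuous (K : Set (EuclideanSpace ℝ (Fin n))) (hK : IsConvexBody n K) :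
    Continuous fun u : EuclideanSpace ℝ (Fin n) => suppFn n K u := by
  obtain ⟨x0, hx0⟩ : K.Nonempty := hK.2.2.mono interior_subset
  obtain ⟨R, hR⟩ := hK.2.1.isBounded.exists_norm_le
  have hR0 : 0 ≤ R := le_trans (norm_nonneg x0) (hR x0 hx0)
  have hbdd : ∀ u : EuclideanSpace ℝ (Fin n),
      BddAbove ((fun x => ⟪x, u⟫) '' K) := fun u =>
    (hK.2.1.image (continuous_id.inner continuous_const)).bddAbove
  have key : ∀ u v : EuclideanSpace ℝ (Fin n),
      suppFn n K u ≤ suppFn n K v + R * ‖u - v‖ := by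
    intro u v
    rw [suppFn, suppFn]
    apply csSup_le (hK.2.2.mono interior_subset |>.image _)
    rintro y ⟨x, hx, rfl⟩
    show ⟪x, u⟫ ≤ sSup ((fun x => ⟪x, v⟫) '' K) + R * ‖u - v‖
    have h1 : ⟪x, u⟫ = ⟪x, v⟫ + ⟪x, u - v⟫ := by rw [inner_sub_right]; ring
    have h2 : ⟪x, v⟫ ≤ sSup ((fun x => ⟪x, v⟫) '' K) := le_csSup (hbdd v) ⟨x, hx, rfl⟩
    have h3 : ⟪x, u - v⟫ ≤ ‖x‖ * ‖u - v‖ := real_inner_le_norm _ _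
    have h4 : ‖x‖ * ‖u - v‖ ≤ R * ‖u - v‖ :=
      mul_le_mul_of_nonneg_right (hR x hx) (norm_nonneg _)
    rw [h1]; linarith
  have : LipschitzWith R.toNNReal (fun u => suppFn n K u) := by
    apply LipschitzWith.of_dist_le_mul
    intro u v
    rw [Real.dist_eq, Real.coe_toNNReal R hR0, abs_sub_le_iff]
    constructor
    · have := key u v; rw [← dist_eq_norm] at this; linarith [this]
    · have := key v u; rw [← dist_eq_norm, dist_comm] at this; linarith [this]
  exact this.continuous

/-- Main analytic lemma: the Hölder-inequality characterization of the integral of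
`g ^ (N/(N+p))` as an infimum. -/
lemma infEq {α : Type*} [TopologicalSpace α] [CompactSpace α] [T2Space α] [MeasurableSpace α]
    [OpensMeasurableSpace α] (μ : MeasureTheory.Measure α) [MeasureTheory.IsFiniteMeasure μ]
    {N p : ℝ} (hN : 1 ≤ N) (hp : 0 < p)
    (g : α → ℝ) (hgc : Continuous g) (hgpos : ∀ u, 0 < g u) :
    ∫ u, (g u) ^ (N / (N + p)) ∂μ =
      sInf {x : ℝ | ∃ ρ : α → ℝ, Continuous ρ ∧ (∀ u, 0 < ρ u) ∧
        x = N * ((1 / N) * ∫ u, (ρ u) ^ (-p) * g u ∂μ) ^ (N / (N + p)) *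
          ((1 / N) * ∫ u, (ρ u) ^ N ∂μ) ^ (p / (N + p))} := by
  have hN0 : (0:ℝ) < N := lt_of_lt_of_le one_pos hN
  have hNp : (0:ℝ) < N + p := by linarith
  set c : ℝ := N / (N + p) with hc_def
  set d : ℝ := p / (N + p) with hd_def
  have hc : 0 < c := div_pos hN0 hNp
  have hd : 0 < d := div_pos hp hNp
  have hcd : c + d = 1 := by rw [hc_def, hd_def]; field_simp
  have hc1 : c < 1 := by linarith
  have hint : ∀ (h : α → ℝ), Continuous h → MeasureTheory.Integrable h μ := fun h hh =>
    hh.integrable_of_hasCompactSupport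
      (IsCompact.of_isClosed_subset isCompact_univ (isClosed_tsupport _) (Set.subset_univ _))
  set I : ℝ := ∫ u, g u ^ c ∂μ with hI_def
  have hgcc : Continuous fun u => g u ^ c :=
    hgc.rpow_const fun u => Or.inl (hgpos u).ne'
  have hInn : 0 ≤ I := MeasureTheory.integral_nonneg fun u => Real.rpow_nonneg (hgpos u).le _
  have mem : ∃ ρ : α → ℝ, Continuous ρ ∧ (∀ u, 0 < ρ u) ∧
      I = N * ((1 / N) * ∫ u, (ρ u) ^ (-p) * g u ∂μ) ^ c *
        ((1 / N) * ∫ u, (ρ u) ^ N ∂μ) ^ d := by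
    refine ⟨fun u => g u ^ (1/(N+p)), hgc.rpow_const (fun u => Or.inl (hgpos u).ne'),
      fun u => Real.rpow_pos_of_pos (hgpos u) _, ?_⟩
    have e1 : (fun u => (g u ^ (1/(N+p))) ^ (-p) * g u) = fun u => g u ^ c := by
      funext u
      rw [← Real.rpow_mul (hgpos u).le]
      nth_rewrite 2 [← Real.rpow_one (g u)]
      rw [← Real.rpow_add (hgpos u)]
      congr 1
      rw [hc_def]
      field_simp
      ring
    have e2 : (fun u => (g u ^ (1/(N+p))) ^ N) = fun u => g u ^ c := by
      funext u
      rw [← Real.rpow_mul (hgpos u).le]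
      congr 1
      rw [hc_def]
      field_simp
    rw [e1, e2, ← hI_def, mul_assoc,
      ← Real.rpow_add' (by positivity) (by rw [hcd]; norm_num), hcd, Real.rpow_one]
    field_simp
  have lb : ∀ x : ℝ, (∃ ρ : α → ℝ, Continuous ρ ∧ (∀ u, 0 < ρ u) ∧
      x = N * ((1 / N) * ∫ u, (ρ u) ^ (-p) * g u ∂μ) ^ c *
        ((1 / N) * ∫ u, (ρ u) ^ N ∂μ) ^ d) → I ≤ x := by
    rintro x ⟨ρ, hρc, hρpos, rfl⟩
    set A : ℝ := ∫ u, (ρ u) ^ (-p) * g u ∂μ with hA_def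
    set B : ℝ := ∫ u, (ρ u) ^ N ∂μ with hB_def
    have hFAc : Continuous fun u => (ρ u) ^ (-p) * g u :=
      (hρc.rpow_const fun u => Or.inl (hρpos u).ne').mul hgc
    have hFBc : Continuous fun u => (ρ u) ^ N :=
      hρc.rpow_const fun u => Or.inl (hρpos u).ne'
    have hFA0 : ∀ u, 0 ≤ (ρ u) ^ (-p) * g u := fun u =>
      mul_nonneg (Real.rpow_nonneg (hρpos u).le _) (hgpos u).le
    have hFB0 : ∀ u, 0 ≤ (ρ u) ^ N := fun u => Real.rpow_nonneg (hρpos u).le _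
    have hA0 : 0 ≤ A := MeasureTheory.integral_nonneg hFA0
    have hB0 : 0 ≤ B := MeasureTheory.integral_nonneg hFB0
    have hconj : (1/c).HolderConjugate (1/d) := by
      rw [Real.holderConjugate_iff]
      constructor
      · rw [one_div]
        exact one_lt_inv_iff₀.mpr ⟨hc, hc1⟩
      · rw [one_div, one_div, inv_inv, inv_inv]
        exact hcd
    have holder : I ≤ A ^ c * B ^ d := by
      have m1 : AEMeasurable
          (fun u => ENNReal.ofReal ((ρ u) ^ (-p) * g u) ^ c) μ :=
        (ENNReal.continuous_rpow_const.measurable.comp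
          hFAc.measurable.ennreal_ofReal).aemeasurable
      have m2 : AEMeasurable
          (fun u => ENNReal.ofReal ((ρ u) ^ N) ^ d) μ :=
        (ENNReal.continuous_rpow_const.measurable.comp
          hFBc.measurable.ennreal_ofReal).aemeasurable
      have key := ENNReal.lintegral_mul_le_Lp_mul_Lq μ hconj m1 m2
      have hpt : ∀ u, ENNReal.ofReal ((ρ u) ^ (-p) * g u) ^ c *
          ENNReal.ofReal ((ρ u) ^ N) ^ d = ENNReal.ofReal (g u ^ c) := by
        intro u
        rw [ENNReal.ofReal_rpow_of_nonneg (hFA0 u) hc.le,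
          ENNReal.ofReal_rpow_of_nonneg (hFB0 u) hd.le,
          ← ENNReal.ofReal_mul (Real.rpow_nonneg (hFA0 u) _)]
        congr 1
        rw [Real.mul_rpow (Real.rpow_nonneg (hρpos u).le _) (hgpos u).le,
          ← Real.rpow_mul (hρpos u).le, ← Real.rpow_mul (hρpos u).le]
        have hre : ρ u ^ (-p * c) * g u ^ c * ρ u ^ (N * d) =
            g u ^ c * ρ u ^ (-p * c + N * d) := by
          rw [Real.rpow_add (hρpos u)]; ring
        have hz : -p * c + N * d = 0 := by
          rw [hc_def, hd_def]; field_simp; ring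
        rw [hre, hz, Real.rpow_zero, mul_one]
      have lhs_eq : (∫⁻ u, ((fun u => ENNReal.ofReal ((ρ u) ^ (-p) * g u) ^ c) *
          (fun u => ENNReal.ofReal ((ρ u) ^ N) ^ d)) u ∂μ) = ENNReal.ofReal I := by
        simp only [Pi.mul_apply]
        rw [MeasureTheory.lintegral_congr hpt,
          ← MeasureTheory.ofReal_integral_eq_lintegral_ofReal (hint _ hgcc)
            (Filter.Eventually.of_forall fun u => Real.rpow_nonneg (hgpos u).le _)]
      have e1 : (fun u => (ENNReal.ofReal ((ρ u) ^ (-p) * g u) ^ c) ^ (1/c)) =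
          fun u => ENNReal.ofReal ((ρ u) ^ (-p) * g u) := by
        funext u
        rw [← ENNReal.rpow_mul, mul_one_div_cancel hc.ne', ENNReal.rpow_one]
      have e2 : (fun u => (ENNReal.ofReal ((ρ u) ^ N) ^ d) ^ (1/d)) =
          fun u => ENNReal.ofReal ((ρ u) ^ N) := by
        funext u
        rw [← ENNReal.rpow_mul, mul_one_div_cancel hd.ne', ENNReal.rpow_one]
      rw [lhs_eq] at key
      simp only [← ENNReal.rpow_mul] at key
      have hc' : c * (1/c) = 1 := mul_one_div_cancel hc.ne'
      have hd' : d * (1/d) = 1 := mul_one_div_cancel hd.ne'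
      rw [show (fun u => ENNReal.ofReal ((ρ u) ^ (-p) * g u) ^ (c * (1/c))) =
          fun u => ENNReal.ofReal ((ρ u) ^ (-p) * g u) by rw [hc']; simp,
        show (fun u => ENNReal.ofReal ((ρ u) ^ N) ^ (d * (1/d))) =
          fun u => ENNReal.ofReal ((ρ u) ^ N) by rw [hd']; simp] at key
      rw [one_div_one_div, one_div_one_div,
        ← MeasureTheory.ofReal_integral_eq_lintegral_ofReal (hint _ hFAc)
          (Filter.Eventually.of_forall hFA0),
        ← MeasureTheory.ofReal_integral_eq_lintegral_ofReal (hint _ hFBc)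
          (Filter.Eventually.of_forall hFB0),
        ENNReal.ofReal_rpow_of_nonneg hA0 hc.le,
        ENNReal.ofReal_rpow_of_nonneg hB0 hd.le,
        ← ENNReal.ofReal_mul (Real.rpow_nonneg hA0 _)] at key
      exact (ENNReal.ofReal_le_ofReal_iff (by positivity)).mp key
    have hrw : N * ((1/N) * A) ^ c * ((1/N) * B) ^ d = A ^ c * B ^ d := by
      rw [Real.mul_rpow (by positivity) hA0, Real.mul_rpow (by positivity) hB0]
      have h1n : (1/N) ^ c * (1/N) ^ d = 1/N := by
        rw [← Real.rpow_add (by positivity), hcd, Real.rpow_one]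
      calc N * ((1/N) ^ c * A ^ c) * ((1/N) ^ d * B ^ d)
          = (N * ((1/N) ^ c * (1/N) ^ d)) * (A ^ c * B ^ d) := by ring
        _ = A ^ c * B ^ d := by rw [h1n]; field_simp
    rw [hrw]
    exact holder
  exact le_antisymm (le_csInf ⟨_, mem⟩ fun x hx => lb x hx) (csInf_le ⟨I, fun x hx => lb x hx⟩ mem)

end AuxLemmas


theorem stmt_7 (n : ℕ) (hn : 1 ≤ n) (p : ℝ) (hp : 0 < p)
    (K : Set (EuclideanSpace ℝ (Fin n))) (hK : IsConvexBody n K)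
    (h0 : (0 : EuclideanSpace ℝ (Fin n)) ∈ interior K)
    (f : (sphere (0 : EuclideanSpace ℝ (Fin n)) 1) → ℝ) (hf : Continuous f) (hfpos : ∀ u, 0 < f u)
    (hS : IsSurfaceMeasure n K
      ((sphMeasure n).withDensity (fun u => ENNReal.ofReal (f u)))) :
    ∫ u, ((suppFn n K ↑u) ^ (1 - p) * f u) ^ ((n : ℝ) / ((n : ℝ) + p)) ∂(sphMeasure n) =
      sInf {x : ℝ | ∃ ρ : (sphere (0 : EuclideanSpace ℝ (Fin n)) 1) → ℝ, Continuous ρ ∧ (∀ u, 0 < ρ u) ∧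
        x = (n : ℝ) *
          ((1 / (n : ℝ)) * ∫ u, (ρ u) ^ (-p) * ((suppFn n K ↑u) ^ (1 - p) * f u) ∂(sphMeasure n)) ^ ((n : ℝ) / ((n : ℝ) + p)) *
            ((1 / (n : ℝ)) * ∫ u, (ρ u) ^ ((n : ℝ)) ∂(sphMeasure n)) ^ (p / ((n : ℝ) + p))} := by

  haveI : MeasureTheory.IsFiniteMeasure (sphMeasure n) := by
    unfold sphMeasure; infer_instance
  have hsc : Continuous fun u : sphere (0 : EuclideanSpace ℝ (Fin n)) 1 => suppFn n K ↑u :=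
    (suppFn_continuous K hK).comp continuous_subtype_val
  have hspos : ∀ u : sphere (0 : EuclideanSpace ℝ (Fin n)) 1, 0 < suppFn n K ↑u :=
    suppFn_pos K hK h0
  have hgc : Continuous fun u : sphere (0 : EuclideanSpace ℝ (Fin n)) 1 =>
      (suppFn n K ↑u) ^ (1 - p) * f u :=
    (hsc.rpow_const fun u => Or.inl (hspos u).ne').mul hf
  have hgpos : ∀ u : sphere (0 : EuclideanSpace ℝ (Fin n)) 1,
      0 < (suppFn n K ↑u) ^ (1 - p) * f u := fun u =>
    mul_pos (Real.rpow_pos_of_pos (hspos u) _) (hfpos u)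
  exact infEq (sphMeasure n) (Nat.one_le_cast.mpr hn) hp _ hgc hgpos
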